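/- arXiv:1401.3605 — 2 statements merged into one kernel-verified Lean document; each statement's English description precedes it below -/
import Mathlib

section
/- Let μ and ν be r×p and p×r matrix functions on [0,T] with entries in L²(0,T), set κ(x,t) = μ(x)ν(t), and define the iterated kernels κ₁(x,t) = ∫_{x−t}^{x} κ(ξ, ξ+t−x) dξ and κ_{k+1}(x,t) = ∫_{x−t}^{x} ∫_{y+t−x}^{y} κ(y,s) κ_k(s, y+t−x) ds dy for 0 ≤ t ≤ x ≤ T. Then there exist constants C₀, C₁ > 0 such that ‖κ_k(x,t)‖ ≤ C₀ C₁^{k−1} x^{k−1}/(k−1)! for all 0 ≤ t ≤ x ≤ T and all k ≥ 1. -/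
/-!
Since `‖κ(y,s)‖ ≤ ‖μ(y)‖ ‖ν(s)‖`, each iteration is controlled by two Cauchy–Schwarz
inequalities against power weights. If `‖κ_k(s,·)‖ ≤ D s^k`, the inner integral defining
`κ_{k+1}(x,t)` is at most `D ‖ν‖₂ y^(k+1/2) / √(2k+1)`, and the outer one is then at most
`D ‖μ‖₂ ‖ν‖₂ x^(k+1) / (√(2k+1) √(2k+2)) ≤ D ‖μ‖₂ ‖ν‖₂ x^(k+1) / (k+1)`, which builds up the
factorial. Each entrywise matrix integral costs a factor `r²` in the Frobenius norm. All
estimates go through lower Lebesgue integrals of norms, so they hold whether or not the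
entrywise integrals defining `κ_k` exist (a non-integrable entry is `0` by convention).
-/

open MeasureTheory Matrix

noncomputable section

attribute [local instance] Matrix.frobeniusNormedAddCommGroup Matrix.frobeniusNormedSpace

/-- The iterated kernels: `iterK κ (k-1) = κ_k`, i.e.
`κ₁(x,t) = ∫_{x-t}^{x} κ(ξ, ξ+t−x) dξ` and
`κ_{k+1}(x,t) = ∫_{x−t}^{x} ∫_{y+t−x}^{y} κ(y,s) κ_k(s, y+t−x) ds dy`. -/
noncomputable def iterK {r : ℕ} (κ : ℝ → ℝ → Matrix (Fin r) (Fin r) ℂ) :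
    ℕ → ℝ → ℝ → Matrix (Fin r) (Fin r) ℂ
  | 0 => fun x t => Matrix.of fun a b => ∫ ξ in (x - t)..x, κ ξ (ξ + t - x) a b
  | (k + 1) => fun x t => Matrix.of fun a b =>
      ∫ y in (x - t)..x, ∫ s in (y + t - x)..y, (κ y s * iterK κ k s (y + t - x)) a b

open Set
open scoped ENNReal

namespace Matrix

variable {l m n E : Type*} [Fintype l] [Fintype m] [Fintype n] [NormedAddCommGroup E]

theorem frobenius_nnnorm_single [DecidableEq m] [DecidableEq n] (i : m) (j : n) (a : E) :
    ‖single i j a‖₊ = ‖a‖₊ := by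
  ext
  simpa [frobenius_norm_def, single_apply, apply_ite, ite_and] using
    Real.pow_rpow_inv_natCast (norm_nonneg a) two_ne_zero

theorem frobenius_enorm_le_sum_enorm (A : Matrix m n E) : ‖A‖ₑ ≤ ∑ i, ∑ j, ‖A i j‖ₑ := by
  classical
  have hsum : ‖A‖₊ ≤ ∑ i, ∑ j, ‖A i j‖₊ := by
    conv_lhs => rw [matrix_eq_sum_single A]
    refine (nnnorm_sum_le _ _).trans (Finset.sum_le_sum fun i _ => (nnnorm_sum_le _ _).trans ?_)
    simp [frobenius_nnnorm_single]
  simpa [enorm_eq_nnnorm] using ENNReal.coe_le_coe.2 hsum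

theorem enorm_entry_le_frobenius_enorm (A : Matrix m n E) (i : m) (j : n) : ‖A i j‖ₑ ≤ ‖A‖ₑ :=
  (PiLp.enorm_apply_le (WithLp.toLp 2 (A i)) j).trans
    (PiLp.enorm_apply_le (WithLp.toLp 2 fun i => WithLp.toLp 2 (A i)) i)

theorem frobenius_enorm_mul {𝕜 : Type*} [RCLike 𝕜] (A : Matrix l m 𝕜) (B : Matrix m n 𝕜) :
    ‖A * B‖ₑ ≤ ‖A‖ₑ * ‖B‖ₑ := by
  simpa [enorm_eq_nnnorm] using ENNReal.coe_le_coe.2 (frobenius_nnnorm_mul A B)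

theorem enorm_of_intervalIntegral_le [NormedSpace ℝ E] (f : ℝ → Matrix m n E) {a b : ℝ}
    (hab : a ≤ b) :
    ‖(of fun i j => ∫ ξ in a..b, f ξ i j : Matrix m n E)‖ₑ ≤
      Fintype.card m * Fintype.card n * ∫⁻ ξ in Ioc a b, ‖f ξ‖ₑ := by
  have hentry (i : m) (j : n) : ‖∫ ξ in a..b, f ξ i j‖ₑ ≤ ∫⁻ ξ in Ioc a b, ‖f ξ‖ₑ := by
    rw [intervalIntegral.integral_of_le hab]
    exact (enorm_integral_le_lintegral_enorm _).trans
      (lintegral_mono fun ξ => enorm_entry_le_frobenius_enorm _ i j)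
  refine (frobenius_enorm_le_sum_enorm _).trans ?_
  calc ∑ i, ∑ j, ‖(of fun i j => ∫ ξ in a..b, f ξ i j : Matrix m n E) i j‖ₑ
      ≤ ∑ _i : m, ∑ _j : n, ∫⁻ ξ in Ioc a b, ‖f ξ‖ₑ :=
        Finset.sum_le_sum fun i _ => Finset.sum_le_sum fun j _ => hentry i j
    _ = _ := by simp [mul_assoc]

theorem memLp_of_entries {X : Type*} [MeasurableSpace X] {μ : Measure X} {p : ℝ≥0∞}
    {f : X → Matrix m n E} (hf : ∀ i j, MemLp (fun x => f x i j) p μ) : MemLp f p μ := by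
  have hfrob : MemLp (fun x => WithLp.toLp 2 fun i => WithLp.toLp 2 (f x i)) p μ :=
    memLp_piLp_iff.2 fun i => memLp_piLp_iff.2 fun j => hf i j
  refine ⟨?_, hfrob.2⟩
  exact (MemLp.of_eval fun i => MemLp.of_eval fun j => hf i j).1

end Matrix

section CauchySchwarz

variable {α E F : Type*} [NormedAddCommGroup E] [NormedAddCommGroup F]

theorem lintegral_enorm_mul_le_eLpNorm_mul_eLpNorm [MeasurableSpace α] {μ : Measure α}
    {f : α → E} {g : α → F} (hf : AEStronglyMeasurable f μ) (hg : AEStronglyMeasurable g μ) :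
    ∫⁻ x, ‖f x‖ₑ * ‖g x‖ₑ ∂μ ≤ eLpNorm f 2 μ * eLpNorm g 2 μ := by
  simpa [eLpNorm_one_eq_lintegral_enorm, enorm_mul] using
    eLpNorm_le_eLpNorm_mul_eLpNorm'_of_norm (r := 1) hf hg (fun u v => ‖u‖ * ‖v‖) 1 (by simp)

theorem eLpNorm_rpow_Ioc_zero {y a : ℝ} (hy : 0 ≤ y) (ha : 0 ≤ a) :
    eLpNorm (fun s : ℝ => s ^ a) 2 (volume.restrict (Ioc 0 y)) =
      ENNReal.ofReal (y ^ (a + 1 / 2) / √(2 * a + 1)) := by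
  have hsq : ∀ s ∈ Ioc (0 : ℝ) y, ‖s ^ a‖ₑ ^ (2 : ℝ) = ENNReal.ofReal (s ^ (2 * a)) := by
    intro s hs
    rw [← ofReal_norm, Real.norm_of_nonneg (Real.rpow_nonneg hs.1.le _),
      ENNReal.ofReal_rpow_of_nonneg (Real.rpow_nonneg hs.1.le _) zero_le_two,
      ← Real.rpow_mul hs.1.le, mul_comm]
  have hint : ∫ s in Ioc 0 y, s ^ (2 * a) = y ^ (2 * a + 1) / (2 * a + 1) := by
    rw [← intervalIntegral.integral_of_le hy, integral_rpow (Or.inl (by linarith))]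
    simp [Real.zero_rpow (by linarith : 2 * a + 1 ≠ 0)]
  rw [eLpNorm_eq_lintegral_rpow_enorm_toReal two_ne_zero ENNReal.ofNat_ne_top,
    ENNReal.toReal_ofNat, setLIntegral_congr_fun measurableSet_Ioc hsq,
    ← ofReal_integral_eq_lintegral_ofReal, hint,
    ENNReal.ofReal_rpow_of_nonneg (by positivity) (by norm_num)]
  · congr 1
    rw [Real.div_rpow (by positivity) (by positivity), ← Real.rpow_mul hy, Real.sqrt_eq_rpow]
    ring_nf
  · exact (intervalIntegral.intervalIntegrable_rpow' (by linarith)).1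
  · exact ae_restrict_of_forall_mem measurableSet_Ioc fun s hs => Real.rpow_nonneg hs.1.le _

theorem lintegral_enorm_mul_rpow_le {h : ℝ → E} {y a : ℝ}
    (hh : AEStronglyMeasurable h (volume.restrict (Ioc 0 y))) (hy : 0 ≤ y) (ha : 0 ≤ a) :
    ∫⁻ s in Ioc 0 y, ‖h s‖ₑ * ENNReal.ofReal (s ^ a) ≤
      eLpNorm h 2 (volume.restrict (Ioc 0 y)) *
        ENNReal.ofReal (y ^ (a + 1 / 2) / √(2 * a + 1)) := by
  rw [← eLpNorm_rpow_Ioc_zero hy ha]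
  calc ∫⁻ s in Ioc 0 y, ‖h s‖ₑ * ENNReal.ofReal (s ^ a)
      = ∫⁻ s in Ioc 0 y, ‖h s‖ₑ * ‖s ^ a‖ₑ := by
        refine setLIntegral_congr_fun measurableSet_Ioc fun s hs => ?_
        rw [Real.enorm_eq_ofReal (Real.rpow_nonneg hs.1.le _)]
    _ ≤ _ := lintegral_enorm_mul_le_eLpNorm_mul_eLpNorm hh
        (measurable_id.pow_const a).aestronglyMeasurable

end CauchySchwarz

theorem measurePreserving_add_right_restrict_Ioc (a b c : ℝ) :
    MeasurePreserving (· + c) (volume.restrict (Ioc a b))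
      (volume.restrict (Ioc (a + c) (b + c))) := by
  simpa using (measurePreserving_add_right volume c).restrict_preimage
    (measurableSet_Ioc (a := a + c) (b := b + c))

theorem add_one_le_sqrt_mul_sqrt {a : ℝ} (ha : 0 ≤ a) : a + 1 ≤ √(2 * a + 1) * √(2 * a + 2) := by
  rw [← Real.sqrt_mul (by linarith)]
  exact Real.le_sqrt_of_sq_le (by nlinarith)

section IteratedKernel

variable {E F : Type*} [NormedAddCommGroup E] [NormedAddCommGroup F] {r : ℕ}
  {κ : ℝ → ℝ → Matrix (Fin r) (Fin r) ℂ} {f : ℝ → E} {g : ℝ → F} {T x t : ℝ}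

theorem enorm_iterK_zero_le (hκ : ∀ y s, ‖κ y s‖ₑ ≤ ‖f y‖ₑ * ‖g s‖ₑ)
    (hf : AEStronglyMeasurable f (volume.restrict (Ioc 0 T)))
    (hg : AEStronglyMeasurable g (volume.restrict (Ioc 0 T)))
    (ht : 0 ≤ t) (htx : t ≤ x) (hxT : x ≤ T) :
    ‖iterK κ 0 x t‖ₑ ≤ r * r * (eLpNorm f 2 (volume.restrict (Ioc 0 T)) *
      eLpNorm g 2 (volume.restrict (Ioc 0 T))) := by
  have hshift : MeasurePreserving (· + (t - x)) (volume.restrict (Ioc (x - t) x))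
      (volume.restrict (Ioc 0 t)) := by
    simpa using measurePreserving_add_right_restrict_Ioc (x - t) x (t - x)
  have hsubf : Ioc (x - t) x ⊆ Ioc 0 T := Ioc_subset_Ioc (by linarith) hxT
  have hsubg : Ioc 0 t ⊆ Ioc 0 T := Ioc_subset_Ioc le_rfl (by linarith)
  have hf' := hf.mono_measure (Measure.restrict_mono hsubf le_rfl)
  have hg' := hg.mono_measure (Measure.restrict_mono hsubg le_rfl)
  calc ‖iterK κ 0 x t‖ₑ ≤ r * r * ∫⁻ ξ in Ioc (x - t) x, ‖κ ξ (ξ + t - x)‖ₑ := by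
        rw [iterK]
        simpa using enorm_of_intervalIntegral_le (fun ξ => κ ξ (ξ + t - x)) (by linarith)
    _ ≤ r * r * ∫⁻ ξ in Ioc (x - t) x, ‖f ξ‖ₑ * ‖(g ∘ (· + (t - x))) ξ‖ₑ := by
        gcongr with ξ
        simpa only [Function.comp_apply, add_sub_assoc] using hκ ξ (ξ + t - x)
    _ ≤ r * r * (eLpNorm f 2 (volume.restrict (Ioc (x - t) x)) *
          eLpNorm (g ∘ (· + (t - x))) 2 (volume.restrict (Ioc (x - t) x))) := by
        gcongr
        exact lintegral_enorm_mul_le_eLpNorm_mul_eLpNorm hf' (hg'.comp_measurePreserving hshift)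
    _ = r * r * (eLpNorm f 2 (volume.restrict (Ioc (x - t) x)) *
          eLpNorm g 2 (volume.restrict (Ioc 0 t))) := by
        rw [eLpNorm_comp_measurePreserving hg' hshift]
    _ ≤ _ := by gcongr

theorem enorm_iterK_inner_le (hκ : ∀ y s, ‖κ y s‖ₑ ≤ ‖f y‖ₑ * ‖g s‖ₑ)
    (hg : AEStronglyMeasurable g (volume.restrict (Ioc 0 T))) {k : ℕ} {D : ℝ≥0∞}
    (ih : ∀ s t', 0 ≤ t' → t' ≤ s → s ≤ T → ‖iterK κ k s t'‖ₑ ≤ D * ENNReal.ofReal (s ^ k))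
    {y : ℝ} (hy : y ∈ Ioc (x - t) x) (htx : t ≤ x) (hxT : x ≤ T) :
    ‖(of fun a b => ∫ s in (y + t - x)..y, (κ y s * iterK κ k s (y + t - x)) a b :
        Matrix (Fin r) (Fin r) ℂ)‖ₑ ≤
      r * r * (D * eLpNorm g 2 (volume.restrict (Ioc 0 T)) * ‖f y‖ₑ) *
        ENNReal.ofReal (y ^ ((k : ℝ) + 1 / 2) / √(2 * k + 1)) := by
  obtain ⟨hxy, hyx⟩ := hy
  have hsub : Ioc 0 y ⊆ Ioc 0 T := Ioc_subset_Ioc le_rfl (by linarith)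
  have hg' := hg.mono_measure (Measure.restrict_mono hsub le_rfl)
  calc _ ≤ r * r * ∫⁻ s in Ioc (y + t - x) y, ‖κ y s * iterK κ k s (y + t - x)‖ₑ := by
        simpa using enorm_of_intervalIntegral_le
          (fun s => κ y s * iterK κ k s (y + t - x)) (by linarith)
    _ ≤ r * r * ∫⁻ s in Ioc (y + t - x) y,
          D * ‖f y‖ₑ * (‖g s‖ₑ * ENNReal.ofReal (s ^ (k : ℝ))) := by
        gcongr 1 with s
        refine setLIntegral_mono' measurableSet_Ioc fun s hs => ?_
        calc ‖κ y s * iterK κ k s (y + t - x)‖ₑ ≤ ‖κ y s‖ₑ * ‖iterK κ k s (y + t - x)‖ₑ :=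
              frobenius_enorm_mul _ _
          _ ≤ ‖f y‖ₑ * ‖g s‖ₑ * (D * ENNReal.ofReal (s ^ k)) :=
              mul_le_mul' (hκ y s) (ih s _ (by linarith) hs.1.le (by linarith [hs.2]))
          _ = _ := by rw [Real.rpow_natCast]; ring
    _ ≤ r * r * (D * ‖f y‖ₑ * ∫⁻ s in Ioc 0 y, ‖g s‖ₑ * ENNReal.ofReal (s ^ (k : ℝ))) := by
        rw [← lintegral_const_mul'' _ (f := fun s => ‖g s‖ₑ * ENNReal.ofReal (s ^ (k : ℝ)))
          (hg'.enorm.mul (by fun_prop))]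
        gcongr 1
        exact lintegral_mono_set (Ioc_subset_Ioc (by linarith) le_rfl)
    _ ≤ r * r * (D * ‖f y‖ₑ * (eLpNorm g 2 (volume.restrict (Ioc 0 T)) *
          ENNReal.ofReal (y ^ ((k : ℝ) + 1 / 2) / √(2 * k + 1)))) := by
        gcongr
        exact (lintegral_enorm_mul_rpow_le hg' (by linarith) k.cast_nonneg).trans
          (by gcongr)
    _ = _ := by ring

theorem enorm_iterK_succ_le (hκ : ∀ y s, ‖κ y s‖ₑ ≤ ‖f y‖ₑ * ‖g s‖ₑ)
    (hf : AEStronglyMeasurable f (volume.restrict (Ioc 0 T)))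
    (hg : AEStronglyMeasurable g (volume.restrict (Ioc 0 T))) {k : ℕ} {D : ℝ≥0∞}
    (ih : ∀ s t', 0 ≤ t' → t' ≤ s → s ≤ T → ‖iterK κ k s t'‖ₑ ≤ D * ENNReal.ofReal (s ^ k))
    (ht : 0 ≤ t) (htx : t ≤ x) (hxT : x ≤ T) :
    ‖iterK κ (k + 1) x t‖ₑ ≤ r ^ 4 * eLpNorm f 2 (volume.restrict (Ioc 0 T)) *
      eLpNorm g 2 (volume.restrict (Ioc 0 T)) * D * ENNReal.ofReal (x ^ (k + 1) / (k + 1)) := by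
  set A := eLpNorm f 2 (volume.restrict (Ioc 0 T))
  set B := eLpNorm g 2 (volume.restrict (Ioc 0 T))
  set c := r * r * (D * B) * ENNReal.ofReal (1 / √(2 * k + 1))
  have hx : 0 ≤ x := by linarith
  have hsub : Ioc 0 x ⊆ Ioc 0 T := Ioc_subset_Ioc le_rfl hxT
  have hf' := hf.mono_measure (Measure.restrict_mono hsub le_rfl)
  have hweights : ENNReal.ofReal (1 / √(2 * k + 1)) *
      ENNReal.ofReal (x ^ ((k : ℝ) + 1 / 2 + 1 / 2) / √(2 * ((k : ℝ) + 1 / 2) + 1)) ≤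
        ENNReal.ofReal (x ^ (k + 1) / (k + 1)) := by
    rw [← ENNReal.ofReal_mul (by positivity)]
    refine ENNReal.ofReal_le_ofReal ?_
    have hexp : (k : ℝ) + 1 / 2 + 1 / 2 = ((k + 1 : ℕ) : ℝ) := by push_cast; ring
    rw [hexp, Real.rpow_natCast, show 2 * ((k : ℝ) + 1 / 2) + 1 = 2 * k + 2 by ring,
      one_div_mul_eq_div, div_div]
    exact div_le_div_of_nonneg_left (by positivity) (by positivity)
      ((add_one_le_sqrt_mul_sqrt k.cast_nonneg).trans_eq (mul_comm _ _))
  calc ‖iterK κ (k + 1) x t‖ₑ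
      ≤ r * r * ∫⁻ y in Ioc (x - t) x, ‖(of fun a b => ∫ s in (y + t - x)..y,
          (κ y s * iterK κ k s (y + t - x)) a b : Matrix (Fin r) (Fin r) ℂ)‖ₑ := by
        rw [iterK]
        simpa using enorm_of_intervalIntegral_le (fun y => (of fun a b => ∫ s in (y + t - x)..y,
          (κ y s * iterK κ k s (y + t - x)) a b : Matrix (Fin r) (Fin r) ℂ)) (by linarith)
    _ ≤ r * r * ∫⁻ y in Ioc (x - t) x,
          c * (‖f y‖ₑ * ENNReal.ofReal (y ^ ((k : ℝ) + 1 / 2))) := by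
        gcongr 1
        refine setLIntegral_mono' measurableSet_Ioc fun y hy =>
          (enorm_iterK_inner_le hκ hg ih hy htx hxT).trans_eq ?_
        rw [div_eq_mul_one_div, ENNReal.ofReal_mul (Real.rpow_nonneg (by linarith [hy.1]) _)]
        ring
    _ ≤ r * r * (c * ∫⁻ y in Ioc 0 x, ‖f y‖ₑ * ENNReal.ofReal (y ^ ((k : ℝ) + 1 / 2))) := by
        rw [← lintegral_const_mul'' _
          (f := fun y => ‖f y‖ₑ * ENNReal.ofReal (y ^ ((k : ℝ) + 1 / 2)))
          (hf'.enorm.mul (by fun_prop))]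
        gcongr 1
        exact lintegral_mono_set (Ioc_subset_Ioc (by linarith) le_rfl)
    _ ≤ r * r * (c * (A * ENNReal.ofReal
          (x ^ ((k : ℝ) + 1 / 2 + 1 / 2) / √(2 * ((k : ℝ) + 1 / 2) + 1)))) := by
        gcongr
        exact (lintegral_enorm_mul_rpow_le hf' hx (by positivity)).trans
          (by gcongr; exact eLpNorm_mono_measure _ (Measure.restrict_mono hsub le_rfl))
    _ = r ^ 4 * A * B * D * (ENNReal.ofReal (1 / √(2 * k + 1)) *
          ENNReal.ofReal (x ^ ((k : ℝ) + 1 / 2 + 1 / 2) / √(2 * ((k : ℝ) + 1 / 2) + 1))) := by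
        ring
    _ ≤ _ := by gcongr

theorem enorm_iterK_le (hκ : ∀ y s, ‖κ y s‖ₑ ≤ ‖f y‖ₑ * ‖g s‖ₑ)
    (hf : AEStronglyMeasurable f (volume.restrict (Ioc 0 T)))
    (hg : AEStronglyMeasurable g (volume.restrict (Ioc 0 T))) (k : ℕ)
    (ht : 0 ≤ t) (htx : t ≤ x) (hxT : x ≤ T) :
    ‖iterK κ k x t‖ₑ ≤
      r ^ 2 * eLpNorm f 2 (volume.restrict (Ioc 0 T)) * eLpNorm g 2 (volume.restrict (Ioc 0 T)) *
        (r ^ 4 * eLpNorm f 2 (volume.restrict (Ioc 0 T)) *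
          eLpNorm g 2 (volume.restrict (Ioc 0 T))) ^ k * ENNReal.ofReal (x ^ k / k.factorial) := by
  set A := eLpNorm f 2 (volume.restrict (Ioc 0 T))
  set B := eLpNorm g 2 (volume.restrict (Ioc 0 T))
  induction k generalizing x t with
  | zero => simpa [pow_two, mul_assoc] using enorm_iterK_zero_le hκ hf hg ht htx hxT
  | succ k ih =>
    have hfac : ENNReal.ofReal (1 / k.factorial) * ENNReal.ofReal (x ^ (k + 1) / (k + 1)) =
        ENNReal.ofReal (x ^ (k + 1) / (k + 1).factorial) := by
      rw [← ENNReal.ofReal_mul (by positivity), Nat.factorial_succ]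
      congr 1
      push_cast
      field_simp
    refine (enorm_iterK_succ_le hκ hf hg (D := r ^ 2 * A * B * (r ^ 4 * A * B) ^ k *
      ENNReal.ofReal (1 / k.factorial)) (fun s t' h₁ h₂ h₃ => (ih h₁ h₂ h₃).trans_eq ?_)
      ht htx hxT).trans_eq ?_
    · rw [div_eq_mul_one_div, ENNReal.ofReal_mul (pow_nonneg (by linarith) _)]
      ring
    · rw [← hfac]
      ring

end IteratedKernel

theorem iterated_kernel_factorial_bound_general
    {r p : ℕ} (T : ℝ)
    (μ : ℝ → Matrix (Fin r) (Fin p) ℂ) (ν : ℝ → Matrix (Fin p) (Fin r) ℂ)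
    (hμ : ∀ a b, MemLp (fun x => μ x a b) 2 (volume.restrict (Set.Ioc (0 : ℝ) T)))
    (hν : ∀ a b, MemLp (fun x => ν x a b) 2 (volume.restrict (Set.Ioc (0 : ℝ) T))) :
    ∃ C₀ > (0 : ℝ), ∃ C₁ > (0 : ℝ), ∀ k : ℕ, ∀ x t : ℝ,
      0 ≤ t → t ≤ x → x ≤ T →
      ‖iterK (fun x' t' => μ x' * ν t') k x t‖
        ≤ C₀ * C₁ ^ k * x ^ k / (Nat.factorial k) := by
  obtain ⟨hμm, hμfin⟩ := Matrix.memLp_of_entries hμ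
  obtain ⟨hνm, hνfin⟩ := Matrix.memLp_of_entries hν
  set C₀ : ℝ≥0∞ := r ^ 2 * eLpNorm μ 2 (volume.restrict (Ioc 0 T)) *
    eLpNorm ν 2 (volume.restrict (Ioc 0 T))
  set C₁ : ℝ≥0∞ := r ^ 4 * eLpNorm μ 2 (volume.restrict (Ioc 0 T)) *
    eLpNorm ν 2 (volume.restrict (Ioc 0 T))
  refine ⟨C₀.toReal + 1, by positivity, C₁.toReal + 1, by positivity,
    fun k x t ht htx hxT => ?_⟩
  have hbound := enorm_iterK_le (fun y s => frobenius_enorm_mul (μ y) (ν s)) hμm hνm k ht htx hxT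
  have hfinite : C₀ * C₁ ^ k * ENNReal.ofReal (x ^ k / k.factorial) ≠ ∞ := by
    simp only [C₀, C₁]
    finiteness
  have hx : 0 ≤ x := ht.trans htx
  calc ‖iterK (fun x' t' => μ x' * ν t') k x t‖
      ≤ (C₀ * C₁ ^ k * ENNReal.ofReal (x ^ k / k.factorial)).toReal := by
        simpa using ENNReal.toReal_mono hfinite hbound
    _ = C₀.toReal * C₁.toReal ^ k * (x ^ k / k.factorial) := by
        simp [ENNReal.toReal_ofReal (by positivity : 0 ≤ x ^ k / k.factorial)]
    _ ≤ (C₀.toReal + 1) * (C₁.toReal + 1) ^ k * (x ^ k / k.factorial) := by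
        gcongr <;> linarith
    _ = _ := by ring

/-- the iterated kernels of `κ(x,t) = μ(x)ν(t)` with square-summable `μ, ν`
satisfy `‖κ_k(x,t)‖ ≤ C₀ C₁^{k−1} x^{k−1}/(k−1)!` on the triangle `0 ≤ t ≤ x ≤ T`
(here `κ_k = iterK κ (k-1)`, so the bound reads `‖iterK κ k x t‖ ≤ C₀ C₁^k x^k / k!`). -/
theorem iterated_kernel_factorial_bound
    {r p : ℕ} (T : ℝ) (hT : 0 < T)
    (μ : ℝ → Matrix (Fin r) (Fin p) ℂ) (ν : ℝ → Matrix (Fin p) (Fin r) ℂ)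
    (hμ : ∀ a b, MemLp (fun x => μ x a b) 2 (volume.restrict (Set.Ioc (0 : ℝ) T)))
    (hν : ∀ a b, MemLp (fun x => ν x a b) 2 (volume.restrict (Set.Ioc (0 : ℝ) T))) :
    ∃ C₀ > (0 : ℝ), ∃ C₁ > (0 : ℝ), ∀ k : ℕ, ∀ x t : ℝ,
      0 ≤ t → t ≤ x → x ≤ T →
      ‖iterK (fun x' t' => μ x' * ν t') k x t‖
        ≤ C₀ * C₁ ^ k * x ^ k / (Nat.factorial k) :=
  iterated_kernel_factorial_bound_general T μ ν hμ hν
end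
end

section
/- Let γ(x) = [γ₁(x) γ₂(x)] be an absolutely continuous m₂×m matrix function on [0,T] (with blocks of sizes m₂×m₁ and m₂×m₂) satisfying γ(x) j γ(x)* ≡ −I_{m₂} and γ'(x) j γ(x)* = 0 almost everywhere. Then for every x: γ₂(x) is invertible, the Schur coefficient γ₂(x)⁻¹γ₁(x) satisfies I_{m₂} − (γ₂⁻¹γ₁)(γ₂⁻¹γ₁)* = γ₂⁻¹(γ₂⁻¹)* (in particular this matrix is invertible), and almost everywhere γ₂' = γ₂ · (γ₂⁻¹γ₁)' · (γ₂⁻¹γ₁)* · (I_{m₂} − (γ₂⁻¹γ₁)(γ₂⁻¹γ₁)*)⁻¹. -/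
/-!
In blocks, `γ j γ* = γ₁γ₁* - γ₂γ₂*`, so `γ j γ* = -I` says `γ₂γ₂* = I + γ₁γ₁*`. This matrix is
positive definite, hence `γ₂` is invertible, and conjugating by `γ₂⁻¹` gives
`I - σσ* = γ₂⁻¹(γ₂⁻¹)*` for `σ = γ₂⁻¹γ₁`. Likewise `γ' j γ* = 0` says `γ₁'γ₁* = γ₂'γ₂*`,
i.e. `γ₁'σ* = γ₂'`. Differentiating `γ₁ = γ₂σ` gives `γ₂σ' = γ₁' - γ₂'σ`, hence
`γ₂σ'σ* = γ₂'(I - σσ*)`. The derivative `σ'` exists wherever `γ'` does, because the difference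
quotient of `M⁻¹` at `x` is `-M(s)⁻¹ · (difference quotient of M) · M(x)⁻¹`.
-/

open MeasureTheory Matrix ComplexOrder

noncomputable section

/-- The signature matrix `j = diag(I_{m₁}, -I_{m₂})`. -/
def Jm (m₁ m₂ : ℕ) : Matrix (Fin m₁ ⊕ Fin m₂) (Fin m₁ ⊕ Fin m₂) ℂ :=
  Matrix.fromBlocks 1 0 0 (-1)

/-- Left `m₂ × m₁` block of an `m₂ × (m₁+m₂)` matrix function. -/
def blkL {m₁ m₂ : ℕ} (γ : ℝ → Matrix (Fin m₂) (Fin m₁ ⊕ Fin m₂) ℂ) (x : ℝ) :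
    Matrix (Fin m₂) (Fin m₁) ℂ :=
  (γ x).submatrix id Sum.inl

/-- Right `m₂ × m₂` block of an `m₂ × (m₁+m₂)` matrix function. -/
def blkR {m₁ m₂ : ℕ} (γ : ℝ → Matrix (Fin m₂) (Fin m₁ ⊕ Fin m₂) ℂ) (x : ℝ) :
    Matrix (Fin m₂) (Fin m₂) ℂ :=
  (γ x).submatrix id Sum.inr

/-- The Schur coefficient `γ₂⁻¹ γ₁`. -/
def schur {m₁ m₂ : ℕ} (γ : ℝ → Matrix (Fin m₂) (Fin m₁ ⊕ Fin m₂) ℂ) (x : ℝ) :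
    Matrix (Fin m₂) (Fin m₁) ℂ :=
  (blkR γ x)⁻¹ * blkL γ x

open Filter Topology

theorem mul_Jm_mul_conjTranspose {p q : Type*} {m₁ m₂ : ℕ}
    (A : Matrix p (Fin m₁ ⊕ Fin m₂) ℂ) (B : Matrix q (Fin m₁ ⊕ Fin m₂) ℂ) :
    A * Jm m₁ m₂ * Bᴴ
      = A.submatrix id Sum.inl * (B.submatrix id Sum.inl)ᴴ
        - A.submatrix id Sum.inr * (B.submatrix id Sum.inr)ᴴ := by
  conv_lhs => rw [← fromCols_toCols A, ← fromCols_toCols B]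
  rw [Jm, fromCols_mul_fromBlocks, conjTranspose_fromCols_eq_fromRows_conjTranspose,
    fromCols_mul_fromRows]
  simp only [Matrix.mul_zero, Matrix.mul_one, Matrix.mul_neg, add_zero, zero_add,
    Matrix.neg_mul, sub_eq_add_neg]
  rfl

theorem blkR_mul_conjTranspose {m₁ m₂ : ℕ} {γ : ℝ → Matrix (Fin m₂) (Fin m₁ ⊕ Fin m₂) ℂ}
    {x : ℝ} (h : γ x * Jm m₁ m₂ * (γ x)ᴴ = -1) :
    blkR γ x * (blkR γ x)ᴴ = 1 + blkL γ x * (blkL γ x)ᴴ := by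
  rw [mul_Jm_mul_conjTranspose] at h
  calc blkR γ x * (blkR γ x)ᴴ
      = blkL γ x * (blkL γ x)ᴴ - (blkL γ x * (blkL γ x)ᴴ - blkR γ x * (blkR γ x)ᴴ) :=
        (sub_sub_cancel _ _).symm
    _ = 1 + blkL γ x * (blkL γ x)ᴴ := by rw [blkL, blkR, h, sub_neg_eq_add, add_comm]

section Algebra

variable {n m R : Type*} [Fintype n] [DecidableEq n] [CommRing R] [StarRing R]

theorem isUnit_of_mul_conjTranspose_eq_one_add {𝕜 : Type*} [RCLike 𝕜] [Fintype m]
    {G₁ : Matrix n m 𝕜} {G₂ : Matrix n n 𝕜} (h : G₂ * G₂ᴴ = 1 + G₁ * G₁ᴴ) : IsUnit G₂ := by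
  have hpd : (G₂ * G₂ᴴ).PosDef := h ▸
    PosDef.one.add_posSemidef (posSemidef_self_mul_conjTranspose G₁)
  exact isUnit_of_mul_isUnit_left hpd.isUnit

theorem conjTranspose_mul_conjTranspose_nonsing_inv {G : Matrix n n R} (hG : IsUnit G) :
    Gᴴ * G⁻¹ᴴ = 1 := by
  rw [← conjTranspose_mul, nonsing_inv_mul _ ((isUnit_iff_isUnit_det G).mp hG),
    conjTranspose_one]

theorem one_sub_inv_mul_mul_conjTranspose [Fintype m] {G₁ : Matrix n m R} {G₂ : Matrix n n R}
    (hG₂ : IsUnit G₂) (h : G₂ * G₂ᴴ = 1 + G₁ * G₁ᴴ) :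
    1 - G₂⁻¹ * G₁ * (G₂⁻¹ * G₁)ᴴ = G₂⁻¹ * G₂⁻¹ᴴ := by
  have hinv : G₂⁻¹ * G₂ * (G₂ᴴ * G₂⁻¹ᴴ) = 1 := by
    rw [conjTranspose_mul_conjTranspose_nonsing_inv hG₂, Matrix.mul_one,
      nonsing_inv_mul _ ((isUnit_iff_isUnit_det G₂).mp hG₂)]
  calc 1 - G₂⁻¹ * G₁ * (G₂⁻¹ * G₁)ᴴ = 1 - G₂⁻¹ * (G₂ * G₂ᴴ - 1) * G₂⁻¹ᴴ := by
        rw [h, add_sub_cancel_left, conjTranspose_mul]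
        simp only [Matrix.mul_assoc]
    _ = G₂⁻¹ * G₂⁻¹ᴴ := by
        rw [Matrix.mul_sub, Matrix.sub_mul, ← Matrix.mul_assoc, Matrix.mul_assoc _ G₂ᴴ, hinv]
        simp

/-- `-(G₂⁻¹ * d₂ * G₂⁻¹) * G₁ + G₂⁻¹ * d₁` is the derivative of `G₂⁻¹ * G₁` when `G₁` and `G₂`
move with velocities `d₁` and `d₂`. -/
theorem deriv_eq_of_mul_conjTranspose_eq [Fintype m] {G₁ d₁ : Matrix n m R}
    {G₂ d₂ : Matrix n n R} (hG₂ : IsUnit G₂) (hd : d₁ * G₁ᴴ = d₂ * G₂ᴴ)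
    (hσ : IsUnit (1 - G₂⁻¹ * G₁ * (G₂⁻¹ * G₁)ᴴ)) :
    d₂ = G₂ * (-(G₂⁻¹ * d₂ * G₂⁻¹) * G₁ + G₂⁻¹ * d₁) * (G₂⁻¹ * G₁)ᴴ
      * (1 - G₂⁻¹ * G₁ * (G₂⁻¹ * G₁)ᴴ)⁻¹ := by
  have hright : G₂ * G₂⁻¹ = 1 := mul_nonsing_inv _ ((isUnit_iff_isUnit_det G₂).mp hG₂)
  have hmul : G₂ * (-(G₂⁻¹ * d₂ * G₂⁻¹) * G₁ + G₂⁻¹ * d₁) = d₁ - d₂ * (G₂⁻¹ * G₁) := by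
    simp only [Matrix.mul_add, Matrix.neg_mul, Matrix.mul_neg, ← Matrix.mul_assoc, hright,
      Matrix.one_mul]
    abel
  have hd₁ : d₁ * (G₂⁻¹ * G₁)ᴴ = d₂ := by
    rw [conjTranspose_mul, ← Matrix.mul_assoc, hd, Matrix.mul_assoc,
      conjTranspose_mul_conjTranspose_nonsing_inv hG₂, Matrix.mul_one]
  have hkey : (d₁ - d₂ * (G₂⁻¹ * G₁)) * (G₂⁻¹ * G₁)ᴴ
      = d₂ * (1 - G₂⁻¹ * G₁ * (G₂⁻¹ * G₁)ᴴ) := by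
    rw [Matrix.sub_mul, hd₁, Matrix.mul_sub, Matrix.mul_one, Matrix.mul_assoc]
  rw [hmul, hkey, Matrix.mul_assoc, mul_nonsing_inv _ ((isUnit_iff_isUnit_det _).mp hσ),
    Matrix.mul_one]

end Algebra

section Calculus

variable {𝕜 : Type*} [RCLike 𝕜] {l m n : Type*}

theorem hasDerivAt_matrix_mul [Fintype m] {A : ℝ → Matrix l m 𝕜} {B : ℝ → Matrix m n 𝕜}
    {A' : Matrix l m 𝕜} {B' : Matrix m n 𝕜} {x : ℝ}
    (hA : ∀ i j, HasDerivAt (fun s => A s i j) (A' i j) x)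
    (hB : ∀ i j, HasDerivAt (fun s => B s i j) (B' i j) x) (i : l) (k : n) :
    HasDerivAt (fun s => (A s * B s) i k) ((A' * B x + A x * B') i k) x := by
  simp only [mul_apply, Matrix.add_apply, ← Finset.sum_add_distrib]
  exact HasDerivAt.fun_sum fun j _ => (hA i j).fun_mul (hB j k)

theorem hasDerivAt_entries_iff_tendsto_slope {M : ℝ → Matrix m n 𝕜} {M' : Matrix m n 𝕜}
    {x : ℝ} :
    (∀ i j, HasDerivAt (fun s => M s i j) (M' i j) x) ↔
      Tendsto (slope M x) (𝓝[≠] x) (𝓝 M') := by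
  simp only [hasDerivAt_iff_tendsto_slope]
  exact (forall_congr' fun i => tendsto_pi_nhds.symm).trans tendsto_pi_nhds.symm

theorem hasDerivAt_matrix_inv [Fintype n] [DecidableEq n] {M : ℝ → Matrix n n 𝕜}
    {M' : Matrix n n 𝕜} {x : ℝ} (hM : ∀ i j, HasDerivAt (fun s => M s i j) (M' i j) x)
    (hx : IsUnit (M x)) :
    ∀ i j, HasDerivAt (fun s => (M s)⁻¹ i j) ((-((M x)⁻¹ * M' * (M x)⁻¹)) i j) x := by
  have hcont : ContinuousAt M x :=
    continuousAt_pi.2 fun i => continuousAt_pi.2 fun j => (hM i j).continuousAt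
  have hdet : IsUnit (M x).det := (isUnit_iff_isUnit_det _).mp hx
  have hinv : ContinuousAt (fun s => (M s)⁻¹) x :=
    (continuousAt_matrix_inv _ (NormedRing.inverse_continuousAt hdet.unit)).comp hcont
  have hunit : ∀ᶠ s in 𝓝 x, IsUnit (M s) := by
    filter_upwards [(continuous_id.matrix_det.continuousAt.comp hcont).eventually_ne
      hdet.ne_zero] with s hs
    exact (isUnit_iff_isUnit_det _).mpr (isUnit_iff_ne_zero.mpr hs)
  have hslope : (fun s => -((M s)⁻¹ * slope M x s * (M x)⁻¹)) =ᶠ[𝓝[≠] x]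
      slope (fun s => (M s)⁻¹) x := by
    filter_upwards [nhdsWithin_le_nhds hunit] with s hs
    rw [slope_def_module, slope_def_module, inv_sub_inv ⟨fun _ => hx, fun _ => hs⟩,
      ← neg_sub (M s), Matrix.mul_neg, Matrix.neg_mul, Matrix.mul_smul, Matrix.smul_mul,
      smul_neg]
  rw [hasDerivAt_entries_iff_tendsto_slope] at hM ⊢
  exact ((((hinv.tendsto.mono_left nhdsWithin_le_nhds).mul hM).mul
    tendsto_const_nhds).neg).congr' hslope

end Calculus

theorem gamma_two_recovery_ode_general
    {m₁ m₂ : ℕ} (T : ℝ)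
    (γ γd : ℝ → Matrix (Fin m₂) (Fin m₁ ⊕ Fin m₂) ℂ)
    (hDeriv : ∀ᵐ x ∂(volume.restrict (Set.Icc (0 : ℝ) T)), ∀ a b,
      HasDerivAt (fun s => γ s a b) (γd x a b) x)
    (hγj : ∀ x ∈ Set.Icc (0 : ℝ) T, γ x * Jm m₁ m₂ * (γ x)ᴴ = -1)
    (hγdj : ∀ᵐ x ∂(volume.restrict (Set.Icc (0 : ℝ) T)),
      γd x * Jm m₁ m₂ * (γ x)ᴴ = 0) :
    (∀ x ∈ Set.Icc (0 : ℝ) T, IsUnit (blkR γ x)) ∧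
    (∀ x ∈ Set.Icc (0 : ℝ) T,
      (1 : Matrix (Fin m₂) (Fin m₂) ℂ) - schur γ x * (schur γ x)ᴴ
        = (blkR γ x)⁻¹ * ((blkR γ x)⁻¹)ᴴ) ∧
    (∀ x ∈ Set.Icc (0 : ℝ) T,
      IsUnit ((1 : Matrix (Fin m₂) (Fin m₂) ℂ) - schur γ x * (schur γ x)ᴴ)) ∧
    (∀ᵐ x ∂(volume.restrict (Set.Icc (0 : ℝ) T)),
      ∃ D : Matrix (Fin m₂) (Fin m₁) ℂ,
        (∀ a b, HasDerivAt (fun s => schur γ s a b) (D a b) x) ∧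
        (γd x).submatrix id Sum.inr
          = blkR γ x * D * (schur γ x)ᴴ *
            ((1 : Matrix (Fin m₂) (Fin m₂) ℂ) - schur γ x * (schur γ x)ᴴ)⁻¹) := by
  have hunit : ∀ x ∈ Set.Icc (0 : ℝ) T, IsUnit (blkR γ x) :=
    fun x hx => isUnit_of_mul_conjTranspose_eq_one_add (blkR_mul_conjTranspose (hγj x hx))
  have hschur : ∀ x ∈ Set.Icc (0 : ℝ) T, 1 - schur γ x * (schur γ x)ᴴ
      = (blkR γ x)⁻¹ * ((blkR γ x)⁻¹)ᴴ := fun x hx =>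
    one_sub_inv_mul_mul_conjTranspose (hunit x hx) (blkR_mul_conjTranspose (hγj x hx))
  have hschurUnit : ∀ x ∈ Set.Icc (0 : ℝ) T, IsUnit (1 - schur γ x * (schur γ x)ᴴ) := by
    intro x hx
    have hinv : IsUnit (blkR γ x)⁻¹ := isUnit_nonsing_inv_iff.mpr (hunit x hx)
    exact hschur x hx ▸ hinv.mul ((isUnit_conjTranspose _).mpr hinv)
  refine ⟨hunit, hschur, hschurUnit, ?_⟩
  filter_upwards [hDeriv, hγdj, ae_restrict_mem measurableSet_Icc] with x hd hdj hx
  have hγ₁ : ∀ a b, HasDerivAt (fun s => blkL γ s a b) ((γd x).submatrix id Sum.inl a b) x :=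
    fun a b => hd a (.inl b)
  have hγ₂ : ∀ a b, HasDerivAt (fun s => blkR γ s a b) ((γd x).submatrix id Sum.inr a b) x :=
    fun a b => hd a (.inr b)
  rw [mul_Jm_mul_conjTranspose, sub_eq_zero] at hdj
  exact ⟨_, hasDerivAt_matrix_mul (hasDerivAt_matrix_inv hγ₂ (hunit x hx)) hγ₁,
    deriv_eq_of_mul_conjTranspose_eq (hunit x hx) hdj (hschurUnit x hx)⟩

/-- for an absolutely continuous `γ = [γ₁ γ₂]` with `γ j γ* ≡ -I` and
`γ' j γ* = 0` a.e., the block `γ₂` is invertible, the Schur coefficient satisfies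
`I - (γ₂⁻¹γ₁)(γ₂⁻¹γ₁)* = γ₂⁻¹(γ₂⁻¹)*` (an invertible matrix), and a.e.
`γ₂' = γ₂ (γ₂⁻¹γ₁)' (γ₂⁻¹γ₁)* (I - (γ₂⁻¹γ₁)(γ₂⁻¹γ₁)*)⁻¹`. -/
theorem gamma_two_recovery_ode
    {m₁ m₂ : ℕ} (T : ℝ) (hT : 0 < T)
    (γ γd : ℝ → Matrix (Fin m₂) (Fin m₁ ⊕ Fin m₂) ℂ)
    (hInt : ∀ a b, IntervalIntegrable (fun t => γd t a b) volume 0 T)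
    (hRep : ∀ x ∈ Set.Icc (0 : ℝ) T, ∀ a b,
      γ x a b = γ 0 a b + ∫ t in (0:ℝ)..x, γd t a b)
    (hDeriv : ∀ᵐ x ∂(volume.restrict (Set.Icc (0 : ℝ) T)), ∀ a b,
      HasDerivAt (fun s => γ s a b) (γd x a b) x)
    (hγj : ∀ x ∈ Set.Icc (0 : ℝ) T, γ x * Jm m₁ m₂ * (γ x)ᴴ = -1)
    (hγdj : ∀ᵐ x ∂(volume.restrict (Set.Icc (0 : ℝ) T)),
      γd x * Jm m₁ m₂ * (γ x)ᴴ = 0) :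
    (∀ x ∈ Set.Icc (0 : ℝ) T, IsUnit (blkR γ x)) ∧
    (∀ x ∈ Set.Icc (0 : ℝ) T,
      (1 : Matrix (Fin m₂) (Fin m₂) ℂ) - schur γ x * (schur γ x)ᴴ
        = (blkR γ x)⁻¹ * ((blkR γ x)⁻¹)ᴴ) ∧
    (∀ x ∈ Set.Icc (0 : ℝ) T,
      IsUnit ((1 : Matrix (Fin m₂) (Fin m₂) ℂ) - schur γ x * (schur γ x)ᴴ)) ∧
    (∀ᵐ x ∂(volume.restrict (Set.Icc (0 : ℝ) T)),
      ∃ D : Matrix (Fin m₂) (Fin m₁) ℂ,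
        (∀ a b, HasDerivAt (fun s => schur γ s a b) (D a b) x) ∧
        (γd x).submatrix id Sum.inr
          = blkR γ x * D * (schur γ x)ᴴ *
            ((1 : Matrix (Fin m₂) (Fin m₂) ℂ) - schur γ x * (schur γ x)ᴴ)⁻¹) :=
  gamma_two_recovery_ode_general T γ γd hDeriv hγj hγdj
end
end
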